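/- Let L be a type of labels and let X = (V, E, s, t) and Y = (W, F, s', t') be L-labeled bipointed digraphs with V and W finite. Suppose both X and Y are pruned, and that there exist a morphism from X to Y and a morphism from Y to X. Then X and Y are isomorphic: there is a bijection f : V → W with f s = s', f t = t', and E u v a ↔ F (f u) (f v) a for all u, v ∈ V and a ∈ L. -/
import Mathlib


/-- A morphism of `L`-labeled bipointed digraphs `(V, E, s, t) → (W, F, s', t')`:
a map on vertices preserving the start vertex, the end vertex, and labeled edges. -/
def IsLBDMorphism {L V W : Type*} (E : V → V → L → Prop) (s t : V)
    (F : W → W → L → Prop) (s' t' : W) (f : V → W) : Prop :=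
  f s = s' ∧ f t = t' ∧ ∀ u v a, E u v a → F (f u) (f v) a

/-- An `L`-labeled bipointed digraph is pruned if its only retraction
(idempotent morphism to itself) is the identity. -/
def IsPrunedLBD {L V : Type*} (E : V → V → L → Prop) (s t : V) : Prop :=
  ∀ r : V → V, IsLBDMorphism E s t E s t r → r ∘ r = r → r = id

lemma IsLBDMorphism.comp {L V W X : Type*} {E : V → V → L → Prop} {s t : V}
    {F : W → W → L → Prop} {s' t' : W} {G : X → X → L → Prop} {s'' t'' : X}
    {f : V → W} {g : W → X} (hg : IsLBDMorphism F s' t' G s'' t'' g)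
    (hf : IsLBDMorphism E s t F s' t' f) :
    IsLBDMorphism E s t G s'' t'' (g ∘ f) := by
  obtain ⟨h1, h2, h3⟩ := hf
  obtain ⟨k1, k2, k3⟩ := hg
  refine ⟨by simp [h1, k1], by simp [h2, k2], fun u v a h => k3 _ _ _ (h3 _ _ _ h)⟩

lemma IsLBDMorphism.iterate {L V : Type*} {E : V → V → L → Prop} {s t : V}
    {f : V → V} (hf : IsLBDMorphism E s t E s t f) (n : ℕ) :
    IsLBDMorphism E s t E s t f^[n] := by
  induction n with
  | zero => exact ⟨rfl, rfl, fun u v a h => h⟩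
  | succ n ih =>
    rw [Function.iterate_succ]
    exact ih.comp hf

lemma exists_idem_iterate {V : Type*} [Finite V] (h : V → V) :
    ∃ n, 0 < n ∧ h^[n] ∘ h^[n] = h^[n] := by
  obtain ⟨a, b, hab, heq⟩ := Finite.exists_ne_map_eq_of_infinite (fun n : ℕ => h^[n])
  wlog hlt : a < b generalizing a b
  · exact this b a hab.symm heq.symm (by omega)
  set p := b - a with hp
  have hpa : a + p = b := by omega
  have hA : ∀ j, h^[a + j * p] = h^[a] := by
    intro j
    induction j with
    | zero => simp
    | succ j ih =>
      have : a + (j + 1) * p = j * p + b := by rw [Nat.succ_mul]; omega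
      rw [this, Function.iterate_add, ← heq, ← Function.iterate_add, Nat.add_comm, ih]
  have hB : ∀ c j, h^[a + c + j * p] = h^[a + c] := by
    intro c j
    have : a + c + j * p = (a + j * p) + c := by omega
    rw [this, Function.iterate_add, hA, ← Function.iterate_add]
  have hp0 : 0 < p := by omega
  have hle : a + 1 ≤ (a + 1) * p := Nat.le_mul_of_pos_right (a + 1) hp0
  refine ⟨(a + 1) * p, by positivity, ?_⟩
  rw [← Function.iterate_add]
  have : (a + 1) * p + (a + 1) * p = a + ((a + 1) * p - a) + (a + 1) * p := by omega
  rw [this, hB]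
  rw [show a + ((a + 1) * p - a) = (a + 1) * p from Nat.add_sub_cancel' (le_trans (Nat.le_succ a) hle)]

/-- Two finite pruned `L`-labeled bipointed digraphs admitting morphisms to each other
are isomorphic: there is a bijection of the vertex sets preserving the basepoints and
the labeled edge relation in both directions. -/
theorem pruned_mutually_homomorphic_implies_isomorphic
    {L V W : Type*} [Finite V] [Finite W]
    (E : V → V → L → Prop) (s t : V) (F : W → W → L → Prop) (s' t' : W)
    (hX : IsPrunedLBD E s t) (hY : IsPrunedLBD F s' t')
    (hXY : ∃ f : V → W, IsLBDMorphism E s t F s' t' f)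
    (hYX : ∃ g : W → V, IsLBDMorphism F s' t' E s t g) :
    ∃ f : V ≃ W, f s = s' ∧ f t = t' ∧
      ∀ (u v : V) (a : L), E u v a ↔ F (f u) (f v) a := by
  obtain ⟨f, hf⟩ := hXY
  obtain ⟨g, hg⟩ := hYX
  have hgf : IsLBDMorphism E s t E s t (g ∘ f) := hg.comp hf
  have hfg : IsLBDMorphism F s' t' F s' t' (f ∘ g) := hf.comp hg
  obtain ⟨n, hn, hidem⟩ := exists_idem_iterate (g ∘ f)
  obtain ⟨m, hm, hidem'⟩ := exists_idem_iterate (f ∘ g)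
  have hid : (g ∘ f)^[n] = id := by
    apply hX _ (hgf.iterate n)
    exact hidem
  have hid' : (f ∘ g)^[m] = id := by
    exact hY _ (hfg.iterate m) hidem'
  -- f is injective
  have hinj : Function.Injective f := by
    intro x y hxy
    have : (g ∘ f)^[n] x = (g ∘ f)^[n] y := by
      obtain ⟨k, rfl⟩ : ∃ k, n = k + 1 := ⟨n - 1, by omega⟩
      rw [Function.iterate_succ_apply, Function.iterate_succ_apply]
      simp [Function.comp, hxy]
    rwa [hid, id, id] at this
  have hsurj : Function.Surjective f := by
    intro w
    obtain ⟨k, rfl⟩ : ∃ k, m = k + 1 := ⟨m - 1, by omega⟩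
    refine ⟨g ((f ∘ g)^[k] w), ?_⟩
    have := congrFun hid' w
    rwa [Function.iterate_succ_apply'] at this
  -- backward edge preservation
  have hback : ∀ u v a, F (f u) (f v) a → E u v a := by
    intro u v a hF
    have h1 : E (g (f u)) (g (f v)) a := hg.2.2 _ _ _ hF
    obtain ⟨k, rfl⟩ : ∃ k, n = k + 1 := ⟨n - 1, by omega⟩
    have h2 := (hgf.iterate k).2.2 _ _ _ h1
    have hu := congrFun hid u
    have hv := congrFun hid v
    rw [Function.iterate_succ_apply] at hu hv
    simp only [Function.comp_apply, id] at hu hv h2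
    rwa [hu, hv] at h2
  refine ⟨Equiv.ofBijective f ⟨hinj, hsurj⟩, hf.1, hf.2.1, fun u v a => ?_⟩
  exact ⟨hf.2.2 u v a, hback u v a⟩
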